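/- sOL is contradictory: the constant ½ is definable as x → (¬x → x) for any x (this expression always evaluates to ½), and both ½ and ¬½ = ½ are designated. -/

import Mathlib

inductive O3 : Type | zero | half | one
deriving DecidableEq

open O3

def oneg : O3 → O3
  | zero => one | one => zero | half => half

def oand : O3 → O3 → O3
  | half, half => half | half, one => one | half, zero => zero
  | one, half => one | one, one => one | one, zero => zero
  | zero, _ => zero

def oor : O3 → O3 → O3
  | half, half => half | half, one => one | half, zero => zero
  | one, _ => one
  | zero, half => zero | zero, one => one | zero, zero => zero

def oimp : O3 → O3 → O3
  | half, y => y | one, y => y | zero, _ => half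

/-- designated values -/
def desig (x : O3) : Prop := x = half ∨ x = one

/-- Kleene meet: minimum w.r.t. 0 < ½ < 1 -/
def kmeet : O3 → O3 → O3
  | zero, _ => zero | _, zero => zero
  | half, _ => half | _, half => half
  | one, one => one

/-- Kleene join: maximum w.r.t. 0 < ½ < 1 -/
def kjoin : O3 → O3 → O3
  | one, _ => one | _, one => one
  | half, _ => half | _, half => half
  | zero, zero => zero

/-- material implication ¬x ∨ y -/
def bimp (x y : O3) : O3 := oor (oneg x) y

theorem oimp_oimp_oneg_self (x : O3) : oimp x (oimp (oneg x) x) = half := by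
  cases x <;> rfl

theorem desig_half : desig half := Or.inl rfl

theorem oneg_half : oneg half = half := rfl

theorem sOL_contradictory :
    (∀ x : O3, oimp x (oimp (oneg x) x) = O3.half) ∧
    desig O3.half ∧ oneg O3.half = O3.half ∧ desig (oneg O3.half) :=
  ⟨oimp_oimp_oneg_self, desig_half, oneg_half, oneg_half ▸ desig_half⟩
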